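/- arXiv:math-ph/0501034 — 3 statements merged into one kernel-verified Lean document; each statement's English description precedes it below -/
import Mathlib

section
/- For m > 0 and 0 < α < 1/2, the function k ↦ 1/|k₀² - |k⃗|² - m²|^{2α} is locally integrable on ℝ^{s+1} (with respect to Lebesgue measure), where k = (k₀, k⃗) ∈ ℝ × ℝ^s. -/
open MeasureTheory Set Metric intervalIntegral

private lemma aux_abs_rpow_intervalIntegrable {r : ℝ} (hr : -1 < r) (a b : ℝ) :
    IntervalIntegrable (fun t : ℝ => |t| ^ r) volume a b := by
  suffices h : ∀ c : ℝ, 0 ≤ c → IntervalIntegrable (fun t : ℝ => |t| ^ r) volume 0 c by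
    have h' : ∀ c : ℝ, IntervalIntegrable (fun t : ℝ => |t| ^ r) volume 0 c := by
      intro c
      rcases le_total 0 c with hc | hc
      · exact h c hc
      · rw [IntervalIntegrable.iff_comp_neg]
        simp only [abs_neg, neg_zero]
        exact h (-c) (by linarith)
    exact (h' a).symm.trans (h' b)
  intro c hc
  rw [intervalIntegrable_iff, uIoc_of_le hc]
  have h0 := intervalIntegrable_rpow' (a := 0) (b := c) hr
  rw [intervalIntegrable_iff, uIoc_of_le hc] at h0
  refine h0.congr_fun (fun x hx => ?_) measurableSet_Ioc
  rw [abs_of_pos hx.1]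

private lemma aux_base_integrableOn {r : ℝ} (hr : -1 < r) {L : ℝ} (hL : 0 ≤ L) :
    IntegrableOn (fun t : ℝ => |t| ^ r) (Icc (-L) L) volume := by
  rw [← intervalIntegrable_iff_integrableOn_Icc_of_le (by linarith : -L ≤ L)]
  exact aux_abs_rpow_intervalIntegrable hr _ _

private lemma aux_shift_integrableOn {r : ℝ} (hr : -1 < r) (a : ℝ) {R : ℝ} (hR : 0 ≤ R) :
    IntegrableOn (fun t : ℝ => |t - a| ^ r) (Icc (-R) R) volume := by
  have h := (aux_abs_rpow_intervalIntegrable hr (-R - a) (R - a)).comp_sub_right a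
  simp only [sub_add_cancel] at h
  rwa [intervalIntegrable_iff_integrableOn_Icc_of_le (by linarith : -R ≤ R)] at h

private lemma aux_integral_bound {r : ℝ} (hr : -1 < r) {a A R : ℝ} (hR : 0 ≤ R)
    (hA : |a| ≤ A) :
    ∫ t in Icc (-R) R, |t - a| ^ r ≤ ∫ t in Icc (-(R + A)) (R + A), |t| ^ r := by
  have hA0 : 0 ≤ A := (abs_nonneg a).trans hA
  obtain ⟨ha1, ha2⟩ := abs_le.mp hA
  have h1 : (∫ t in Icc (-R) R, |t - a| ^ r) = ∫ t in Ioc (-R - a) (R - a), |t| ^ r := by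
    rw [MeasureTheory.integral_Icc_eq_integral_Ioc,
      ← intervalIntegral.integral_of_le (by linarith : -R ≤ R),
      intervalIntegral.integral_comp_sub_right (fun t => |t| ^ r) a,
      intervalIntegral.integral_of_le (by linarith : -R - a ≤ R - a)]
  rw [h1]
  refine setIntegral_mono_set (aux_base_integrableOn hr (by linarith : (0:ℝ) ≤ R + A))
    (Filter.Eventually.of_forall fun t => Real.rpow_nonneg (abs_nonneg t) r) ?_
  refine HasSubset.Subset.eventuallyLE fun t ht => ?_
  exact ⟨by simp only [neg_add]; linarith [ht.1], by linarith [ht.2]⟩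

private lemma aux_min_bound {r m : ℝ} (hm : 0 < m) (hr : 0 < r) {x y : ℝ} (hx : 0 ≤ x)
    (hy : m ≤ y) : (x * y) ^ (-r) ≤ m ^ (-r) * x ^ (-r) := by
  rcases hx.eq_or_lt with h | h
  · rw [← h, zero_mul, Real.zero_rpow (by linarith : -r ≠ 0)]
    positivity
  · have h1 : m * x ≤ x * y := by nlinarith
    calc (x * y) ^ (-r) ≤ (m * x) ^ (-r) :=
          Real.rpow_le_rpow_of_nonpos (by positivity) h1 (by linarith)
      _ = m ^ (-r) * x ^ (-r) := Real.mul_rpow hm.le hx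

private lemma aux_prod_bound {r m : ℝ} (hm : 0 < m) (hr : 0 < r) {b t : ℝ} (hb : m ≤ b) :
    |t ^ 2 - b ^ 2| ^ (-r) ≤ m ^ (-r) * (|t - b| ^ (-r) + |t + b| ^ (-r)) := by
  have hfac : |t ^ 2 - b ^ 2| = |t - b| * |t + b| := by
    rw [← abs_mul]; congr 1; ring
  have hsum : 2 * b ≤ |t + b| + |t - b| := by
    have h1 : (t + b) - (t - b) = 2 * b := by ring
    have h2 := abs_sub (t + b) (t - b)
    rw [h1] at h2
    calc 2 * b ≤ |2 * b| := le_abs_self _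
      _ ≤ |t + b| + |t - b| := h2
  rcases le_total |t - b| |t + b| with hc | hc
  · have hy : m ≤ |t + b| := by linarith
    rw [hfac]
    refine (aux_min_bound hm hr (abs_nonneg _) hy).trans ?_
    refine mul_le_mul_of_nonneg_left ?_ (Real.rpow_nonneg hm.le _)
    exact le_add_of_nonneg_right (Real.rpow_nonneg (abs_nonneg _) _)
  · have hy : m ≤ |t - b| := by linarith
    rw [hfac, mul_comm]
    refine (aux_min_bound hm hr (abs_nonneg _) hy).trans ?_
    refine mul_le_mul_of_nonneg_left ?_ (Real.rpow_nonneg hm.le _)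
    exact le_add_of_nonneg_left (Real.rpow_nonneg (abs_nonneg _) _)

private lemma aux_meas_comp {X : Type*} [TopologicalSpace X] [MeasurableSpace X]
    [OpensMeasurableSpace X] {h : X → ℝ} (hh : Continuous h) (r : ℝ) (hr : 0 ≤ r) :
    Measurable fun x => |h x| ^ (-r) := by
  have he : (fun x => |h x| ^ (-r)) = fun x => (|h x| ^ r)⁻¹ :=
    funext fun x => Real.rpow_neg (abs_nonneg _) r
  rw [he]
  exact ((hh.abs.rpow_const fun x => Or.inr hr).measurable).inv

/-- For `m > 0` and `0 < α < 1/2`, the function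
`k ↦ 1/|k₀² - ‖k⃗‖² - m²|^(2α)` is locally integrable on `ℝ^{s+1} = ℝ × ℝ^s`. -/
theorem locallyIntegrable_inv_abs_minkowski_rpow
    (s : ℕ) (hs : 1 ≤ s) (m α : ℝ) (hm : 0 < m) (hα0 : 0 < α) (hα : α < 1/2) :
    LocallyIntegrable
      (fun k : ℝ × EuclideanSpace ℝ (Fin s) =>
        1 / |k.1 ^ 2 - ‖k.2‖ ^ 2 - m ^ 2| ^ (2 * α))
      (volume : Measure (ℝ × EuclideanSpace ℝ (Fin s))) := by
  set E := EuclideanSpace ℝ (Fin s)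
  set r : ℝ := 2 * α with hr_def
  have hr0 : 0 < r := by simp only [hr_def]; linarith
  have hr1 : r < 1 := by simp only [hr_def]; linarith
  have hrneg : (-1 : ℝ) < -r := by linarith
  have hfeq : (fun k : ℝ × E => 1 / |k.1 ^ 2 - ‖k.2‖ ^ 2 - m ^ 2| ^ r)
      = fun k : ℝ × E => |k.1 ^ 2 - ‖k.2‖ ^ 2 - m ^ 2| ^ (-r) := by
    funext k
    rw [Real.rpow_neg (abs_nonneg _), one_div]
  rw [hfeq, locallyIntegrable_iff]
  intro K hK
  obtain ⟨R₀, hR₀⟩ := (isBounded_iff_subset_closedBall (0 : ℝ × E)).mp hK.isBounded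
  set R : ℝ := max R₀ 0 with hR_def
  have hR : 0 ≤ R := le_max_right _ _
  have hKR : K ⊆ closedBall (0 : ℝ × E) R :=
    hR₀.trans (closedBall_subset_closedBall (le_max_left _ _))
  -- the comparison function
  set b : E → ℝ := fun v => Real.sqrt (‖v‖ ^ 2 + m ^ 2) with hb_def
  have hbcont : Continuous b :=
    Real.continuous_sqrt.comp ((continuous_norm.pow 2).add continuous_const)
  have hbm : ∀ v : E, m ≤ b v := by
    intro v
    have h1 : m = Real.sqrt (m ^ 2) := (Real.sqrt_sq hm.le).symm
    rw [h1]
    exact Real.sqrt_le_sqrt (le_add_of_nonneg_left (sq_nonneg _))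
  have hbsq : ∀ v : E, (b v) ^ 2 = ‖v‖ ^ 2 + m ^ 2 := fun v =>
    Real.sq_sqrt (by positivity)
  have hble : ∀ v : E, ‖v‖ ≤ R → b v ≤ R + m := by
    intro v hv
    have h1 : ‖v‖ ^ 2 + m ^ 2 ≤ (R + m) ^ 2 := by nlinarith [norm_nonneg v]
    calc b v ≤ Real.sqrt ((R + m) ^ 2) := Real.sqrt_le_sqrt h1
      _ = R + m := Real.sqrt_sq (by linarith)
  set g : ℝ × E → ℝ :=
    fun k => m ^ (-r) * (|k.1 - b k.2| ^ (-r) + |k.1 + b k.2| ^ (-r)) with hg_def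
  have hpt : ∀ k : ℝ × E, |k.1 ^ 2 - ‖k.2‖ ^ 2 - m ^ 2| ^ (-r) ≤ g k := by
    intro k
    have h1 : k.1 ^ 2 - ‖k.2‖ ^ 2 - m ^ 2 = k.1 ^ 2 - (b k.2) ^ 2 := by
      rw [hbsq]; ring
    rw [h1]
    exact aux_prod_bound hm hr0 (hbm k.2)
  -- measurability
  have hf_meas : Measurable fun k : ℝ × E => |k.1 ^ 2 - ‖k.2‖ ^ 2 - m ^ 2| ^ (-r) :=
    aux_meas_comp (((continuous_fst.pow 2).sub
      ((continuous_norm.comp continuous_snd).pow 2)).sub continuous_const) r hr0.le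
  have hg_meas : Measurable g := by
    refine Measurable.const_mul (Measurable.add ?_ ?_) _
    · exact aux_meas_comp (continuous_fst.sub (hbcont.comp continuous_snd)) r hr0.le
    · exact aux_meas_comp (continuous_fst.add (hbcont.comp continuous_snd)) r hr0.le
  -- reduce to the rectangle
  have hsub : K ⊆ Icc (-R) R ×ˢ closedBall (0 : E) R := by
    intro k hk
    have h1 : k ∈ closedBall ((0 : ℝ), (0 : E)) R := hKR hk
    rw [← closedBall_prod_same] at h1
    refine ⟨?_, h1.2⟩
    have := h1.1
    rw [Real.closedBall_eq_Icc] at this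
    simpa using this
  refine IntegrableOn.mono_set ?_ hsub
  -- integrability of the slices of g
  have hslice : ∀ v : E, Integrable (fun t => g (t, v)) (volume.restrict (Icc (-R) R)) := by
    intro v
    have h1 : IntegrableOn (fun t : ℝ => |t - b v| ^ (-r)) (Icc (-R) R) volume :=
      aux_shift_integrableOn hrneg (b v) hR
    have h2 : IntegrableOn (fun t : ℝ => |t + b v| ^ (-r)) (Icc (-R) R) volume := by
      have h3 : IntegrableOn (fun t : ℝ => |t - -(b v)| ^ (-r)) (Icc (-R) R) volume :=
        aux_shift_integrableOn hrneg (-(b v)) hR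
      simpa only [sub_neg_eq_add] using h3
    exact (h1.add h2).const_mul _
  -- integrability of g on the rectangle
  have hg_int : IntegrableOn g (Icc (-R) R ×ˢ closedBall (0 : E) R) volume := by
    rw [IntegrableOn, Measure.volume_eq_prod, ← Measure.prod_restrict]
    refine (integrable_prod_iff' hg_meas.aestronglyMeasurable).mpr ⟨?_, ?_⟩
    · exact Filter.Eventually.of_forall hslice
    · haveI : IsFiniteMeasure (volume.restrict (closedBall (0 : E) R)) :=
        ⟨by rw [Measure.restrict_apply_univ]; exact measure_closedBall_lt_top⟩
      set C0 : ℝ := ∫ t in Icc (-(R + (R + m))) (R + (R + m)), |t| ^ (-r) with hC0_def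
      refine Integrable.mono' (integrable_const (m ^ (-r) * (C0 + C0)))
        ((hg_meas.norm.stronglyMeasurable.integral_prod_left').aestronglyMeasurable) ?_
      filter_upwards [ae_restrict_mem measurableSet_closedBall] with v hv
      have hvR : ‖v‖ ≤ R := by simpa using hv
      have hgnn : ∀ t : ℝ, 0 ≤ g (t, v) := by
        intro t
        have := Real.rpow_nonneg (abs_nonneg (t - b v)) (-r)
        have := Real.rpow_nonneg (abs_nonneg (t + b v)) (-r)
        have := Real.rpow_nonneg hm.le (-r)
        simp only [hg_def]
        positivity
      have hnormeq : ∀ t : ℝ, ‖g (t, v)‖ = g (t, v) := fun t => Real.norm_of_nonneg (hgnn t)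
      rw [Real.norm_of_nonneg (integral_nonneg fun t => norm_nonneg _)]
      simp only [hnormeq]
      have h1 : IntegrableOn (fun t : ℝ => |t - b v| ^ (-r)) (Icc (-R) R) volume :=
        aux_shift_integrableOn hrneg (b v) hR
      have h2 : IntegrableOn (fun t : ℝ => |t - -(b v)| ^ (-r)) (Icc (-R) R) volume :=
      aux_shift_integrableOn hrneg (-(b v)) hR
      have h2' : IntegrableOn (fun t : ℝ => |t + b v| ^ (-r)) (Icc (-R) R) volume := by
        simpa only [sub_neg_eq_add] using h2
      have hsplit : (∫ t in Icc (-R) R, g (t, v))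
          = m ^ (-r) * ((∫ t in Icc (-R) R, |t - b v| ^ (-r))
              + ∫ t in Icc (-R) R, |t + b v| ^ (-r)) := by
        simp only [hg_def]
        rw [MeasureTheory.integral_const_mul, integral_add h1 h2']
      rw [hsplit]
      have hbabs : |b v| ≤ R + m := by
        rw [abs_of_nonneg (by linarith [hbm v] : (0:ℝ) ≤ b v)]
        exact hble v hvR
      have hb1 : (∫ t in Icc (-R) R, |t - b v| ^ (-r)) ≤ C0 :=
        aux_integral_bound hrneg hR hbabs
      have hb2 : (∫ t in Icc (-R) R, |t + b v| ^ (-r)) ≤ C0 := by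
        have h4 : (∫ t in Icc (-R) R, |t - -(b v)| ^ (-r)) ≤ C0 :=
          aux_integral_bound hrneg hR (by rwa [abs_neg])
        simpa only [sub_neg_eq_add] using h4
      exact mul_le_mul_of_nonneg_left (add_le_add hb1 hb2) (Real.rpow_nonneg hm.le _)
  -- conclude by domination
  refine Integrable.mono' hg_int hf_meas.aestronglyMeasurable
    (Filter.Eventually.of_forall fun k => ?_)
  rw [Real.norm_of_nonneg (Real.rpow_nonneg (abs_nonneg _) _)]
  exact hpt k
end

section
/- Fix 0 < α < 1/2, m > 0, and n ≥ 2. The function on ℝ^{(s+1)n} given by F(k₁,…,kₙ) = ∑_{j=1}^n ∏_{l=1}^{j-1} μ⁻_α(k_l) · μ_α(k_j) · ∏_{l=j+1}^n μ⁺_α(k_l) is nonnegative, and F(k₁,…,kₙ) = 0 unless ∑_{l=r}^n k_l ∈ {q : q₀ ≥ 0} for every 2 ≤ r ≤ n when restricted to the set {∑_{l=1}^n k_l = 0}; more precisely, each summand vanishes unless k_l ∈ V̄⁻ := {q₀ ≤ −m} for l < j and k_l ∈ V̄⁺ := {q₀ ≥ m} for l > j. -/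
open Real

/-- The Minkowski square `k² = k₀² - |k⃗|²` of `k = (k₀, k⃗) ∈ ℝ × ℝˢ`. -/
noncomputable def minkSq {s : ℕ} (k : ℝ × EuclideanSpace ℝ (Fin s)) : ℝ :=
  k.1 ^ 2 - ‖k.2‖ ^ 2

noncomputable def muPlus (s : ℕ) (m α : ℝ) (k : ℝ × EuclideanSpace ℝ (Fin s)) : ℝ :=
  (2 * π) ^ (-((s : ℝ) + 1) / 2) * Real.sin (π * α) *
    Set.indicator {k : ℝ × EuclideanSpace ℝ (Fin s) | minkSq k > m ^ 2 ∧ k.1 > 0}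
      (fun k => (minkSq k - m ^ 2) ^ (-α)) k

noncomputable def muMinus (s : ℕ) (m α : ℝ) (k : ℝ × EuclideanSpace ℝ (Fin s)) : ℝ :=
  (2 * π) ^ (-((s : ℝ) + 1) / 2) * Real.sin (π * α) *
    Set.indicator {k : ℝ × EuclideanSpace ℝ (Fin s) | minkSq k > m ^ 2 ∧ k.1 < 0}
      (fun k => (minkSq k - m ^ 2) ^ (-α)) k

noncomputable def muZero (s : ℕ) (m α : ℝ) (k : ℝ × EuclideanSpace ℝ (Fin s)) : ℝ :=
  (2 * π) ^ (-((s : ℝ) + 1) / 2) *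
    (Set.indicator {k : ℝ × EuclideanSpace ℝ (Fin s) | minkSq k > m ^ 2}
        (fun _ => Real.cos (π * α)) k +
      Set.indicator {k : ℝ × EuclideanSpace ℝ (Fin s) | minkSq k < m ^ 2} 1 k) *
    |minkSq k - m ^ 2| ^ (-α)

/-- The `j`-th summand of the Fourier-transformed truncated `n`-point Wightman function:
`∏_{l<j} μ⁻_α(k_l) · μ_α(k_j) · ∏_{l>j} μ⁺_α(k_l)`. -/
noncomputable def wightmandSummand (s n : ℕ) (m α : ℝ) (j : Fin n)
    (k : Fin n → ℝ × EuclideanSpace ℝ (Fin s)) : ℝ :=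
  (∏ l ∈ Finset.Iio j, muMinus s m α (k l)) * muZero s m α (k j) *
    ∏ l ∈ Finset.Ioi j, muPlus s m α (k l)

section Aux

open Real

lemma muPlus_nonneg (s : ℕ) (m α : ℝ) (hα0 : 0 < α) (hα : α < 1 / 2)
    (k : ℝ × EuclideanSpace ℝ (Fin s)) : 0 ≤ muPlus s m α k := by
  unfold muPlus
  have h1 : (0:ℝ) ≤ (2 * π) ^ (-((s : ℝ) + 1) / 2) :=
    Real.rpow_nonneg (by positivity) _
  have h2 : 0 ≤ Real.sin (π * α) := by
    apply Real.sin_nonneg_of_nonneg_of_le_pi (by positivity)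
    nlinarith [Real.pi_pos]
  have h3 : 0 ≤ Set.indicator {k : ℝ × EuclideanSpace ℝ (Fin s) | minkSq k > m ^ 2 ∧ k.1 > 0}
      (fun k => (minkSq k - m ^ 2) ^ (-α)) k := by
    apply Set.indicator_nonneg
    intro x hx
    exact Real.rpow_nonneg (by simp only [Set.mem_setOf_eq] at hx; linarith [hx.1]) _
  positivity

lemma muMinus_nonneg (s : ℕ) (m α : ℝ) (hα0 : 0 < α) (hα : α < 1 / 2)
    (k : ℝ × EuclideanSpace ℝ (Fin s)) : 0 ≤ muMinus s m α k := by
  unfold muMinus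
  have h1 : (0:ℝ) ≤ (2 * π) ^ (-((s : ℝ) + 1) / 2) :=
    Real.rpow_nonneg (by positivity) _
  have h2 : 0 ≤ Real.sin (π * α) := by
    apply Real.sin_nonneg_of_nonneg_of_le_pi (by positivity)
    nlinarith [Real.pi_pos]
  have h3 : 0 ≤ Set.indicator {k : ℝ × EuclideanSpace ℝ (Fin s) | minkSq k > m ^ 2 ∧ k.1 < 0}
      (fun k => (minkSq k - m ^ 2) ^ (-α)) k := by
    apply Set.indicator_nonneg
    intro x hx
    exact Real.rpow_nonneg (by simp only [Set.mem_setOf_eq] at hx; linarith [hx.1]) _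
  positivity

lemma muZero_nonneg (s : ℕ) (m α : ℝ) (hα0 : 0 < α) (hα : α < 1 / 2)
    (k : ℝ × EuclideanSpace ℝ (Fin s)) : 0 ≤ muZero s m α k := by
  unfold muZero
  have h1 : (0:ℝ) ≤ (2 * π) ^ (-((s : ℝ) + 1) / 2) :=
    Real.rpow_nonneg (by positivity) _
  have hcos : 0 ≤ Real.cos (π * α) := by
    apply Real.cos_nonneg_of_mem_Icc
    constructor
    · nlinarith [Real.pi_pos]
    · nlinarith [Real.pi_pos]
  have h2 : 0 ≤ Set.indicator {k : ℝ × EuclideanSpace ℝ (Fin s) | minkSq k > m ^ 2}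
      (fun _ => Real.cos (π * α)) k + Set.indicator
        {k : ℝ × EuclideanSpace ℝ (Fin s) | minkSq k < m ^ 2} 1 k := by
    have := Set.indicator_nonneg (fun x (_ : x ∈ {k : ℝ × EuclideanSpace ℝ (Fin s) | minkSq k > m ^ 2}) => hcos) k
    have := Set.indicator_nonneg (s := {k : ℝ × EuclideanSpace ℝ (Fin s) | minkSq k < m ^ 2})
      (f := (1 : ℝ × EuclideanSpace ℝ (Fin s) → ℝ)) (fun x _ => by norm_num) k
    linarith
  have h3 : 0 ≤ |minkSq k - m ^ 2| ^ (-α) := Real.rpow_nonneg (abs_nonneg _) _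
  positivity

lemma muMinus_support (s : ℕ) (m α : ℝ) (hm : 0 < m)
    (k : ℝ × EuclideanSpace ℝ (Fin s)) (h : muMinus s m α k ≠ 0) : k.1 ≤ -m := by
  unfold muMinus at h
  have hind : Set.indicator {k : ℝ × EuclideanSpace ℝ (Fin s) | minkSq k > m ^ 2 ∧ k.1 < 0}
      (fun k => (minkSq k - m ^ 2) ^ (-α)) k ≠ 0 := by
    intro h0; rw [h0, mul_zero] at h; exact h rfl
  have hmem : k ∈ {k : ℝ × EuclideanSpace ℝ (Fin s) | minkSq k > m ^ 2 ∧ k.1 < 0} := by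
    by_contra hmem
    exact hind (Set.indicator_of_notMem hmem _)
  simp only [Set.mem_setOf_eq, minkSq] at hmem
  obtain ⟨h1, h2⟩ := hmem
  nlinarith [sq_nonneg (‖k.2‖), sq_nonneg (k.1 + m)]

lemma muPlus_support (s : ℕ) (m α : ℝ) (hm : 0 < m)
    (k : ℝ × EuclideanSpace ℝ (Fin s)) (h : muPlus s m α k ≠ 0) : m ≤ k.1 := by
  unfold muPlus at h
  have hind : Set.indicator {k : ℝ × EuclideanSpace ℝ (Fin s) | minkSq k > m ^ 2 ∧ k.1 > 0}
      (fun k => (minkSq k - m ^ 2) ^ (-α)) k ≠ 0 := by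
    intro h0; rw [h0, mul_zero] at h; exact h rfl
  have hmem : k ∈ {k : ℝ × EuclideanSpace ℝ (Fin s) | minkSq k > m ^ 2 ∧ k.1 > 0} := by
    by_contra hmem
    exact hind (Set.indicator_of_notMem hmem _)
  simp only [Set.mem_setOf_eq, minkSq] at hmem
  obtain ⟨h1, h2⟩ := hmem
  nlinarith [sq_nonneg (‖k.2‖), sq_nonneg (k.1 - m)]

end Aux

/-- The density `F(k₁,…,kₙ) = ∑_j ∏_{l<j} μ⁻_α(k_l) μ_α(k_j) ∏_{l>j} μ⁺_α(k_l)` is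
nonnegative; each summand vanishes unless `k_l ∈ V̄⁻ = {q₀ ≤ -m}` for `l < j` and
`k_l ∈ V̄⁺ = {q₀ ≥ m}` for `l > j`; and on the set `∑ k_l = 0` every tail partial sum
`∑_{l ≥ r} k_l` (`r ≥ 2`) has nonnegative energy component on the support of each summand. -/
theorem wightman_density_nonneg_and_support
    (s n : ℕ) (hs : 1 ≤ s) (hn : 2 ≤ n) (m α : ℝ) (hm : 0 < m)
    (hα0 : 0 < α) (hα : α < 1 / 2) :
    (∀ k : Fin n → ℝ × EuclideanSpace ℝ (Fin s),
        0 ≤ ∑ j : Fin n, wightmandSummand s n m α j k) ∧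
    (∀ (k : Fin n → ℝ × EuclideanSpace ℝ (Fin s)) (j : Fin n),
        wightmandSummand s n m α j k ≠ 0 →
          (∀ l, l < j → (k l).1 ≤ -m) ∧ (∀ l, j < l → m ≤ (k l).1)) ∧
    (∀ (k : Fin n → ℝ × EuclideanSpace ℝ (Fin s)) (j : Fin n),
        wightmandSummand s n m α j k ≠ 0 → (∑ l : Fin n, k l) = 0 →
          ∀ r : Fin n, (r : ℕ) ≠ 0 → 0 ≤ ∑ l ∈ Finset.Ici r, (k l).1) := by
  constructor
  · intro k
    apply Finset.sum_nonneg
    intro j _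
    unfold wightmandSummand
    have hA : 0 ≤ ∏ l ∈ Finset.Iio j, muMinus s m α (k l) :=
      Finset.prod_nonneg fun l _ => muMinus_nonneg s m α hα0 hα (k l)
    have hB := muZero_nonneg s m α hα0 hα (k j)
    have hC : 0 ≤ ∏ l ∈ Finset.Ioi j, muPlus s m α (k l) :=
      Finset.prod_nonneg fun l _ => muPlus_nonneg s m α hα0 hα (k l)
    positivity
  have key : ∀ (k : Fin n → ℝ × EuclideanSpace ℝ (Fin s)) (j : Fin n),
      wightmandSummand s n m α j k ≠ 0 →
        (∀ l, l < j → (k l).1 ≤ -m) ∧ (∀ l, j < l → m ≤ (k l).1) := by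
    intro k j h
    unfold wightmandSummand at h
    have hA : (∏ l ∈ Finset.Iio j, muMinus s m α (k l)) ≠ 0 := fun h0 => h (by rw [h0]; ring)
    have hC : (∏ l ∈ Finset.Ioi j, muPlus s m α (k l)) ≠ 0 := fun h0 => h (by rw [h0]; ring)
    rw [Finset.prod_ne_zero_iff] at hA hC
    refine ⟨fun l hl => muMinus_support s m α hm (k l) (hA l (Finset.mem_Iio.2 hl)),
      fun l hl => muPlus_support s m α hm (k l) (hC l (Finset.mem_Ioi.2 hl))⟩
  refine ⟨key, ?_⟩
  intro k j h hsum r hr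
  obtain ⟨hneg, hpos⟩ := key k j h
  have hfst : ∑ l : Fin n, (k l).1 = 0 := by
    have := congrArg Prod.fst hsum
    simpa [Prod.fst_sum] using this
  rcases le_or_gt r j with hrj | hjr
  · have hsplit : ∑ l ∈ Finset.Iio r, (k l).1 + ∑ l ∈ Finset.Ici r, (k l).1 = 0 := by
      have hD : Disjoint (Finset.Iio r) (Finset.Ici r) := by
        simp only [Finset.disjoint_left, Finset.mem_Iio, Finset.mem_Ici]
        exact fun x hx => not_le.2 hx
      have hU : Finset.Iio r ∪ Finset.Ici r = Finset.univ := by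
        ext x; simp [lt_or_ge]
      rw [← Finset.sum_union hD, hU, hfst]
    have hle : ∑ l ∈ Finset.Iio r, (k l).1 ≤ 0 := by
      apply Finset.sum_nonpos
      intro l hl
      have := hneg l (lt_of_lt_of_le (Finset.mem_Iio.1 hl) hrj)
      linarith
    linarith
  · apply Finset.sum_nonneg
    intro l hl
    have := hpos l (lt_of_lt_of_le hjr (Finset.mem_Ici.1 hl))
    linarith
end

section
/- For 0 < α < 1/2 and m > 0 there exists a constant a > 0 such that for all Schwartz functions f on ℝ^{s+1}: ∫_{ℝ^{s+1}} |f(k)| · |k² − m²|^{-α} (1 + |k|²)^{-(s+1)} dk ≤ a · sup_{k} |(1+|k|²)^{s+1} f(k)|. -/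
open MeasureTheory Real Set
open scoped ENNReal

noncomputable def f1 (α : ℝ) : ℝ → ℝ := (Set.Ioo (-1:ℝ) 1).indicator (fun u => |u| ^ (-α))

lemma f1_nonneg (α x : ℝ) : 0 ≤ f1 α x :=
  Set.indicator_nonneg (fun u _ => Real.rpow_nonneg (abs_nonneg u) _) x

lemma f1_meas (α : ℝ) : Measurable (f1 α) := by
  unfold f1
  apply Measurable.indicator ?_ measurableSet_Ioo
  fun_prop

lemma integrableOn_f1core {α : ℝ} (hα0 : 0 < α) (hα : α < 1/2) :
    IntegrableOn (fun u : ℝ => |u| ^ (-α)) (Set.Ioo (-1:ℝ) 1) := by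
  have h1 : IntervalIntegrable (fun u : ℝ => |u| ^ (-α)) volume 0 1 := by
    rw [intervalIntegrable_iff_integrableOn_Ioo_of_le zero_le_one]
    apply (((intervalIntegral.integrableOn_Ioo_rpow_iff (s := -α) one_pos).2 (by linarith)).congr_fun ?_ measurableSet_Ioo)
    intro x hx
    simp only []
    rw [abs_of_pos hx.1]
  have h2 : IntervalIntegrable (fun u : ℝ => |u| ^ (-α)) volume (-1) 0 := by
    have h3 := (IntervalIntegrable.iff_comp_neg (f := fun u : ℝ => |u| ^ (-α))
      (a := 1) (b := 0)).mp h1.symm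
    simpa using h3
  have h4 := h2.trans h1
  rwa [intervalIntegrable_iff_integrableOn_Ioo_of_le (by norm_num)] at h4

lemma kappa1_lt_top {α : ℝ} (hα0 : 0 < α) (hα : α < 1/2) :
    ∫⁻ x : ℝ, ENNReal.ofReal (f1 α x) < ⊤ := by
  have h : ∀ x : ℝ, ENNReal.ofReal (f1 α x)
      = Set.indicator (Set.Ioo (-1:ℝ) 1) (fun u => ENNReal.ofReal (|u| ^ (-α))) x := by
    intro x
    unfold f1
    by_cases hx : x ∈ Set.Ioo (-1:ℝ) 1 <;> simp [hx]
  simp_rw [h]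
  rw [lintegral_indicator measurableSet_Ioo]
  exact (integrableOn_f1core hα0 hα).lintegral_lt_top

lemma kappa2_int : Integrable (fun x : ℝ => (1 + x^2) ^ (-(2:ℝ))) := by
  have h := integrable_rpow_neg_one_add_norm_sq (E := ℝ) (μ := volume) (r := 4) (by simp)
  have he : (-(4:ℝ)/2) = (-(2:ℝ)) := by norm_num
  simpa [Real.norm_eq_abs, sq_abs, he] using h

lemma lint_shift {α : ℝ} (hα0 : 0 < α) (t : ℝ) :
    ∫⁻ x : ℝ, ENNReal.ofReal (|x - t| ^ (-α) * (1 + x^2) ^ (-(2:ℝ)))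
      ≤ (∫⁻ x : ℝ, ENNReal.ofReal (f1 α x))
        + ∫⁻ x : ℝ, ENNReal.ofReal ((1 + x^2) ^ (-(2:ℝ))) := by
  have hpt : ∀ x : ℝ, ENNReal.ofReal (|x - t| ^ (-α) * (1 + x^2) ^ (-(2:ℝ)))
      ≤ ENNReal.ofReal (f1 α (x - t)) + ENNReal.ofReal ((1 + x^2) ^ (-(2:ℝ))) := by
    intro x
    by_cases hx : |x - t| < 1
    · have hmem : x - t ∈ Set.Ioo (-1:ℝ) 1 := by
        constructor <;> [linarith [neg_abs_le (x - t)]; linarith [le_abs_self (x - t)]]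
      have h1 : f1 α (x - t) = |x - t| ^ (-α) := Set.indicator_of_mem hmem _
      have hw : (1 + x^2 : ℝ) ^ (-(2:ℝ)) ≤ 1 :=
        Real.rpow_le_one_of_one_le_of_nonpos (by nlinarith) (by norm_num)
      refine le_trans ?_ le_self_add
      rw [h1]
      exact ENNReal.ofReal_le_ofReal (by
        calc |x - t| ^ (-α) * (1 + x^2) ^ (-(2:ℝ))
            ≤ |x - t| ^ (-α) * 1 :=
              mul_le_mul_of_nonneg_left hw (Real.rpow_nonneg (abs_nonneg _) _)
          _ = |x - t| ^ (-α) := mul_one _)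
    · push_neg at hx
      have h2 : |x - t| ^ (-α) ≤ 1 :=
        Real.rpow_le_one_of_one_le_of_nonpos hx (by linarith)
      refine le_trans ?_ le_add_self
      exact ENNReal.ofReal_le_ofReal (by
        calc |x - t| ^ (-α) * (1 + x^2) ^ (-(2:ℝ))
            ≤ 1 * (1 + x^2) ^ (-(2:ℝ)) :=
              mul_le_mul_of_nonneg_right h2 (Real.rpow_nonneg (by nlinarith) _)
          _ = (1 + x^2) ^ (-(2:ℝ)) := one_mul _)
  calc ∫⁻ x : ℝ, ENNReal.ofReal (|x - t| ^ (-α) * (1 + x^2) ^ (-(2:ℝ)))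
      ≤ ∫⁻ x : ℝ, (ENNReal.ofReal (f1 α (x - t))
          + ENNReal.ofReal ((1 + x^2) ^ (-(2:ℝ)))) := lintegral_mono hpt
    _ = (∫⁻ x : ℝ, ENNReal.ofReal (f1 α (x - t)))
          + ∫⁻ x : ℝ, ENNReal.ofReal ((1 + x^2) ^ (-(2:ℝ))) := by
        apply lintegral_add_left
        exact (ENNReal.measurable_ofReal.comp ((f1_meas α).comp (by fun_prop)))
    _ = (∫⁻ x : ℝ, ENNReal.ofReal (f1 α x))
          + ∫⁻ x : ℝ, ENNReal.ofReal ((1 + x^2) ^ (-(2:ℝ))) := by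
        rw [lintegral_sub_right_eq_self (fun x => ENNReal.ofReal (f1 α x)) t]

-- factor lemma
lemma rpow_factor {m α : ℝ} (hm : 0 < m) (hα0 : 0 < α) {u v : ℝ} (hv : m ≤ |v|) :
    |u * v| ^ (-α) ≤ m ^ (-α) * |u| ^ (-α) := by
  rcases eq_or_ne u 0 with rfl | hu
  · rw [zero_mul, abs_zero, Real.zero_rpow (by intro h; simp at h; linarith : (-α) ≠ 0)]
    positivity
  · have hu' : 0 < |u| := abs_pos.mpr hu
    have h1 : 0 < m * |u| := by positivity
    have h2 : m * |u| ≤ |u * v| := by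
      rw [abs_mul]
      calc m * |u| = |u| * m := mul_comm _ _
        _ ≤ |u| * |v| := by nlinarith
    calc |u * v| ^ (-α) ≤ (m * |u|) ^ (-α) :=
          Real.rpow_le_rpow_of_nonpos h1 h2 (by linarith)
      _ = m ^ (-α) * |u| ^ (-α) := Real.mul_rpow hm.le hu'.le

lemma key1 {m α : ℝ} (hm : 0 < m) (hα0 : 0 < α) {b : ℝ} (hb : m ≤ b) (x : ℝ) :
    |x^2 - b^2| ^ (-α) ≤ m ^ (-α) * (|x - b| ^ (-α) + |x + b| ^ (-α)) := by
  have hfac : x^2 - b^2 = (x - b) * (x + b) := by ring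
  by_cases hv : m ≤ |x + b|
  · calc |x^2 - b^2| ^ (-α) = |(x - b) * (x + b)| ^ (-α) := by rw [hfac]
      _ ≤ m ^ (-α) * |x - b| ^ (-α) := rpow_factor hm hα0 hv
      _ ≤ m ^ (-α) * (|x - b| ^ (-α) + |x + b| ^ (-α)) := by
          have := Real.rpow_nonneg (abs_nonneg (x + b)) (-α)
          nlinarith [Real.rpow_nonneg (le_of_lt hm) (-α)]
  · push_neg at hv
    have hv' : m ≤ |x - b| := by
      have h := abs_sub_abs_le_abs_sub (x - b) (x + b)
      have h2 : |(x - b) - (x + b)| = 2 * b := by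
        rw [show (x - b) - (x + b) = -(2*b) by ring, abs_neg, abs_of_pos (by linarith)]
      -- |x - b| ≥ |x-b - (x+b)| - |x+b| = 2b - |x+b| > 2b - m ≥ m
      have h3 : 2 * b - |x + b| ≤ |x - b| := by
        have := abs_sub (x - b) (x + b)
        nlinarith [abs_add_le (x - b) (-(x+b)), abs_neg (x + b),
          abs_sub_abs_le_abs_sub (x - b) (x + b)]
      linarith
    calc |x^2 - b^2| ^ (-α) = |(x + b) * (x - b)| ^ (-α) := by rw [hfac]; ring_nf
      _ ≤ m ^ (-α) * |x + b| ^ (-α) := rpow_factor hm hα0 hv'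
      _ ≤ m ^ (-α) * (|x - b| ^ (-α) + |x + b| ^ (-α)) := by
          have := Real.rpow_nonneg (abs_nonneg (x - b)) (-α)
          nlinarith [Real.rpow_nonneg (le_of_lt hm) (-α)]

lemma key2 {s : ℕ} (hs : 1 ≤ s) (x r : ℝ) :
    (1 + x^2 + r^2) ^ (-(2*(s:ℝ)+2)) ≤ (1 + x^2) ^ (-(2:ℝ)) * (1 + r^2) ^ (-((s:ℝ)+1)) := by
  set A : ℝ := 1 + x^2 with hA
  set B : ℝ := 1 + r^2 with hB
  set C : ℝ := 1 + x^2 + r^2 with hC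
  have hA1 : (1:ℝ) ≤ A := by nlinarith
  have hB1 : (1:ℝ) ≤ B := by nlinarith
  have hC1 : (1:ℝ) ≤ C := by nlinarith
  have hAC : A ≤ C := by nlinarith
  have hBC : B ≤ C := by nlinarith
  have hs2 : (2:ℝ) ≤ (s:ℝ) + 1 := by
    have : (1:ℝ) ≤ (s:ℝ) := by exact_mod_cast hs
    linarith
  have h1 : A ^ (2:ℝ) ≤ C ^ ((s:ℝ)+1) :=
    le_trans (Real.rpow_le_rpow (by linarith) hAC (by norm_num))
      (Real.rpow_le_rpow_of_exponent_le hC1 hs2)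
  have h2 : B ^ ((s:ℝ)+1) ≤ C ^ ((s:ℝ)+1) :=
    Real.rpow_le_rpow (by linarith) hBC (by linarith)
  have h3 : A ^ (2:ℝ) * B ^ ((s:ℝ)+1) ≤ C ^ (2*(s:ℝ)+2) := by
    calc A ^ (2:ℝ) * B ^ ((s:ℝ)+1) ≤ C ^ ((s:ℝ)+1) * C ^ ((s:ℝ)+1) := by
          apply mul_le_mul h1 h2 (Real.rpow_nonneg (by linarith) _)
            (Real.rpow_nonneg (by linarith) _)
      _ = C ^ (((s:ℝ)+1) + ((s:ℝ)+1)) := (Real.rpow_add (by linarith) _ _).symm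
      _ = C ^ (2*(s:ℝ)+2) := by ring_nf
  rw [Real.rpow_neg (by linarith : (0:ℝ) ≤ C), Real.rpow_neg (by linarith : (0:ℝ) ≤ A),
    Real.rpow_neg (by linarith : (0:ℝ) ≤ B), ← mul_inv]
  apply inv_anti₀
  · positivity
  · exact h3

lemma integrableA (s : ℕ) (hs : 1 ≤ s) {m α : ℝ} (hm : 0 < m) (hα0 : 0 < α) (hα : α < 1/2) :
    Integrable (fun k : ℝ × EuclideanSpace ℝ (Fin s) =>
      |k.1 ^ 2 - ‖k.2‖ ^ 2 - m ^ 2| ^ (-α) * (1 + k.1 ^ 2 + ‖k.2‖ ^ 2) ^ (-(2 * (s:ℝ) + 2))) := by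
  set κ : ℝ≥0∞ := (∫⁻ x : ℝ, ENNReal.ofReal (f1 α x))
      + ∫⁻ x : ℝ, ENNReal.ofReal ((1 + x^2) ^ (-(2:ℝ))) with hκdef
  have hκ : κ ≠ ⊤ :=
    (ENNReal.add_lt_top.2 ⟨kappa1_lt_top hα0 hα, kappa2_int.lintegral_lt_top⟩).ne
  have hFmeas : Measurable (fun k : ℝ × EuclideanSpace ℝ (Fin s) =>
      |k.1 ^ 2 - ‖k.2‖ ^ 2 - m ^ 2| ^ (-α) * (1 + k.1 ^ 2 + ‖k.2‖ ^ 2) ^ (-(2 * (s:ℝ) + 2))) := by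
    fun_prop
  have hFnn : ∀ k : ℝ × EuclideanSpace ℝ (Fin s),
      0 ≤ |k.1 ^ 2 - ‖k.2‖ ^ 2 - m ^ 2| ^ (-α)
        * (1 + k.1 ^ 2 + ‖k.2‖ ^ 2) ^ (-(2 * (s:ℝ) + 2)) := fun k =>
    mul_nonneg (Real.rpow_nonneg (abs_nonneg _) _) (Real.rpow_nonneg (by positivity) _)
  refine ⟨hFmeas.aestronglyMeasurable, ?_⟩
  rw [hasFiniteIntegral_iff_ofReal (Filter.Eventually.of_forall hFnn)]
  rw [Measure.volume_eq_prod]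
  rw [lintegral_prod_symm (fun a : ℝ × EuclideanSpace ℝ (Fin s) =>
    ENNReal.ofReal (|a.1 ^ 2 - ‖a.2‖ ^ 2 - m ^ 2| ^ (-α)
      * (1 + a.1 ^ 2 + ‖a.2‖ ^ 2) ^ (-(2 * (s:ℝ) + 2))))
    ((ENNReal.measurable_ofReal.comp hFmeas).aemeasurable)]
  -- inner bound
  have hinner : ∀ y : EuclideanSpace ℝ (Fin s),
      (∫⁻ x : ℝ, ENNReal.ofReal (|x ^ 2 - ‖y‖ ^ 2 - m ^ 2| ^ (-α)
          * (1 + x ^ 2 + ‖y‖ ^ 2) ^ (-(2 * (s:ℝ) + 2))))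
        ≤ ENNReal.ofReal (m ^ (-α) * (1 + ‖y‖^2) ^ (-((s:ℝ)+1))) * (2 * κ) := by
    intro y
    set b : ℝ := Real.sqrt (‖y‖^2 + m^2) with hbdef
    have hb2 : b^2 = ‖y‖^2 + m^2 := Real.sq_sqrt (by positivity)
    have hb0 : 0 ≤ b := Real.sqrt_nonneg _
    have hbm : m ≤ b := by nlinarith [sq_nonneg (‖y‖:ℝ)]
    have hcnn : 0 ≤ m ^ (-α) * (1 + ‖y‖^2) ^ (-((s:ℝ)+1)) := by positivity
    have hpt : ∀ x : ℝ, ENNReal.ofReal (|x ^ 2 - ‖y‖ ^ 2 - m ^ 2| ^ (-α)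
          * (1 + x ^ 2 + ‖y‖ ^ 2) ^ (-(2 * (s:ℝ) + 2)))
        ≤ ENNReal.ofReal (m ^ (-α) * (1 + ‖y‖^2) ^ (-((s:ℝ)+1)))
          * (ENNReal.ofReal (|x - b| ^ (-α) * (1 + x^2) ^ (-(2:ℝ)))
            + ENNReal.ofReal (|x + b| ^ (-α) * (1 + x^2) ^ (-(2:ℝ)))) := by
      intro x
      have e1 : x^2 - ‖y‖^2 - m^2 = x^2 - b^2 := by rw [hb2]; ring
      have hle : |x ^ 2 - ‖y‖ ^ 2 - m ^ 2| ^ (-α)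
            * (1 + x ^ 2 + ‖y‖ ^ 2) ^ (-(2 * (s:ℝ) + 2))
          ≤ (m ^ (-α) * (1 + ‖y‖^2) ^ (-((s:ℝ)+1)))
            * (|x - b| ^ (-α) * (1 + x^2) ^ (-(2:ℝ))
              + |x + b| ^ (-α) * (1 + x^2) ^ (-(2:ℝ))) := by
        calc |x ^ 2 - ‖y‖ ^ 2 - m ^ 2| ^ (-α)
              * (1 + x ^ 2 + ‖y‖ ^ 2) ^ (-(2 * (s:ℝ) + 2))
            ≤ (m ^ (-α) * (|x - b| ^ (-α) + |x + b| ^ (-α)))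
              * ((1 + x^2) ^ (-(2:ℝ)) * (1 + ‖y‖^2) ^ (-((s:ℝ)+1))) := by
              apply mul_le_mul
              · rw [e1]; exact key1 hm hα0 hbm x
              · exact key2 hs x ‖y‖
              · exact Real.rpow_nonneg (by positivity) _
              · positivity
          _ = (m ^ (-α) * (1 + ‖y‖^2) ^ (-((s:ℝ)+1)))
              * (|x - b| ^ (-α) * (1 + x^2) ^ (-(2:ℝ))
                + |x + b| ^ (-α) * (1 + x^2) ^ (-(2:ℝ))) := by ring
      calc ENNReal.ofReal (|x ^ 2 - ‖y‖ ^ 2 - m ^ 2| ^ (-α)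
            * (1 + x ^ 2 + ‖y‖ ^ 2) ^ (-(2 * (s:ℝ) + 2)))
          ≤ ENNReal.ofReal ((m ^ (-α) * (1 + ‖y‖^2) ^ (-((s:ℝ)+1)))
            * (|x - b| ^ (-α) * (1 + x^2) ^ (-(2:ℝ))
              + |x + b| ^ (-α) * (1 + x^2) ^ (-(2:ℝ)))) := ENNReal.ofReal_le_ofReal hle
        _ = ENNReal.ofReal (m ^ (-α) * (1 + ‖y‖^2) ^ (-((s:ℝ)+1)))
            * ENNReal.ofReal (|x - b| ^ (-α) * (1 + x^2) ^ (-(2:ℝ))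
              + |x + b| ^ (-α) * (1 + x^2) ^ (-(2:ℝ))) := ENNReal.ofReal_mul hcnn
        _ ≤ _ := by
            exact mul_le_mul_right (ENNReal.ofReal_add_le) _
    have hmeas1 : Measurable fun x : ℝ =>
        ENNReal.ofReal (|x - b| ^ (-α) * (1 + x^2) ^ (-(2:ℝ))) := by fun_prop
    have h2 := lint_shift hα0 (-b)
    simp only [sub_neg_eq_add] at h2
    calc (∫⁻ x : ℝ, ENNReal.ofReal (|x ^ 2 - ‖y‖ ^ 2 - m ^ 2| ^ (-α)
          * (1 + x ^ 2 + ‖y‖ ^ 2) ^ (-(2 * (s:ℝ) + 2))))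
        ≤ ∫⁻ x : ℝ, ENNReal.ofReal (m ^ (-α) * (1 + ‖y‖^2) ^ (-((s:ℝ)+1)))
          * (ENNReal.ofReal (|x - b| ^ (-α) * (1 + x^2) ^ (-(2:ℝ)))
            + ENNReal.ofReal (|x + b| ^ (-α) * (1 + x^2) ^ (-(2:ℝ)))) := lintegral_mono hpt
      _ = ENNReal.ofReal (m ^ (-α) * (1 + ‖y‖^2) ^ (-((s:ℝ)+1)))
          * ∫⁻ x : ℝ, (ENNReal.ofReal (|x - b| ^ (-α) * (1 + x^2) ^ (-(2:ℝ)))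
            + ENNReal.ofReal (|x + b| ^ (-α) * (1 + x^2) ^ (-(2:ℝ)))) :=
          lintegral_const_mul' _ _ ENNReal.ofReal_ne_top
      _ = ENNReal.ofReal (m ^ (-α) * (1 + ‖y‖^2) ^ (-((s:ℝ)+1)))
          * ((∫⁻ x : ℝ, ENNReal.ofReal (|x - b| ^ (-α) * (1 + x^2) ^ (-(2:ℝ))))
            + ∫⁻ x : ℝ, ENNReal.ofReal (|x + b| ^ (-α) * (1 + x^2) ^ (-(2:ℝ)))) := by
          rw [lintegral_add_left hmeas1]
      _ ≤ ENNReal.ofReal (m ^ (-α) * (1 + ‖y‖^2) ^ (-((s:ℝ)+1))) * (κ + κ) := by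
          apply mul_le_mul_right
          exact add_le_add (lint_shift hα0 b) h2
      _ = ENNReal.ofReal (m ^ (-α) * (1 + ‖y‖^2) ^ (-((s:ℝ)+1))) * (2 * κ) := by
          rw [two_mul]
  -- outer integral
  have hEint : Integrable (fun y : EuclideanSpace ℝ (Fin s) =>
      m ^ (-α) * ((1:ℝ) + ‖y‖^2) ^ (-((s:ℝ)+1))) := by
    have h := integrable_rpow_neg_one_add_norm_sq (E := EuclideanSpace ℝ (Fin s))
      (μ := volume) (r := 2*(s:ℝ)+2)
      (by rw [finrank_euclideanSpace_fin]; linarith [Nat.cast_nonneg (α := ℝ) s])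
    have he : -(2*(s:ℝ)+2)/2 = -((s:ℝ)+1) := by ring
    rw [he] at h
    exact h.const_mul (m ^ (-α))
  calc (∫⁻ y : EuclideanSpace ℝ (Fin s), ∫⁻ x : ℝ,
        ENNReal.ofReal (|x ^ 2 - ‖y‖ ^ 2 - m ^ 2| ^ (-α)
          * (1 + x ^ 2 + ‖y‖ ^ 2) ^ (-(2 * (s:ℝ) + 2))))
      ≤ ∫⁻ y : EuclideanSpace ℝ (Fin s),
          ENNReal.ofReal (m ^ (-α) * (1 + ‖y‖^2) ^ (-((s:ℝ)+1))) * (2 * κ) :=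
        lintegral_mono hinner
    _ = (∫⁻ y : EuclideanSpace ℝ (Fin s),
          ENNReal.ofReal (m ^ (-α) * (1 + ‖y‖^2) ^ (-((s:ℝ)+1)))) * (2 * κ) :=
        lintegral_mul_const' _ _ (by
          simp only [ne_eq, ENNReal.mul_eq_top]
          push_neg
          constructor <;> intro h <;> simp_all [hκ])
    _ < ⊤ := by
        apply ENNReal.mul_lt_top hEint.lintegral_lt_top
        exact ENNReal.mul_lt_top (by norm_num) (lt_top_iff_ne_top.2 hκ)

/-- Prototype estimate: for `0 < α < 1/2` and `m > 0` there is `a > 0` such that for all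
Schwartz functions `f` on `ℝ^{s+1}`,
`∫ |f(k)| |k² - m²|^{-α} (1+|k|²)^{-(s+1)} dk ≤ a · sup_k |(1+|k|²)^{s+1} f(k)|`,
where `k² = k₀² - |k⃗|²` is the Minkowski square. -/
theorem tempered_measure_estimate
    (s : ℕ) (hs : 1 ≤ s) (m α : ℝ) (hm : 0 < m) (hα0 : 0 < α) (hα : α < 1 / 2) :
    ∃ a > (0 : ℝ), ∀ f : SchwartzMap (ℝ × EuclideanSpace ℝ (Fin s)) ℂ,
      ∫ k : ℝ × EuclideanSpace ℝ (Fin s),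
          ‖f k‖ * |k.1 ^ 2 - ‖k.2‖ ^ 2 - m ^ 2| ^ (-α) *
            (1 + k.1 ^ 2 + ‖k.2‖ ^ 2) ^ (-((s : ℝ) + 1)) ≤
        a * ⨆ k : ℝ × EuclideanSpace ℝ (Fin s),
              (1 + k.1 ^ 2 + ‖k.2‖ ^ 2) ^ (s + 1) * ‖f k‖ := by
  have hGint := integrableA s hs hm hα0 hα
  set G : ℝ × EuclideanSpace ℝ (Fin s) → ℝ := fun k =>
    |k.1 ^ 2 - ‖k.2‖ ^ 2 - m ^ 2| ^ (-α) * (1 + k.1 ^ 2 + ‖k.2‖ ^ 2) ^ (-(2 * (s:ℝ) + 2))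
    with hGdef
  refine ⟨max (∫ k, G k) 1, lt_of_lt_of_le zero_lt_one (le_max_right _ _), ?_⟩
  intro f
  set M : ℝ := ⨆ k : ℝ × EuclideanSpace ℝ (Fin s),
      (1 + k.1 ^ 2 + ‖k.2‖ ^ 2) ^ (s + 1) * ‖f k‖ with hMdef
  -- the sup is attained over a bounded family
  have hb1 : ∀ k : ℝ × EuclideanSpace ℝ (Fin s),
      1 + k.1 ^ 2 + ‖k.2‖ ^ 2 ≤ 2 * (1 + ‖k‖) ^ 2 := by
    intro k
    have h1 : ‖k.1‖ ≤ ‖k‖ := norm_fst_le k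
    have h2 : ‖k.2‖ ≤ ‖k‖ := norm_snd_le k
    rw [Real.norm_eq_abs] at h1
    have h3 : k.1 ^ 2 ≤ ‖k‖ ^ 2 := by nlinarith [sq_abs k.1, abs_nonneg k.1, norm_nonneg k]
    have h4 : ‖k.2‖ ^ 2 ≤ ‖k‖ ^ 2 := by nlinarith [norm_nonneg k.2, norm_nonneg k]
    nlinarith [norm_nonneg k]
  have hsem : ∀ k : ℝ × EuclideanSpace ℝ (Fin s),
      (1 + ‖k‖) ^ (2 * (s + 1)) * ‖f k‖ ≤ 2 ^ (2 * (s + 1)) *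
        (Finset.Iic (2 * (s + 1), 0)).sup (fun m' => SchwartzMap.seminorm ℝ m'.1 m'.2) f := by
    intro k
    have h := SchwartzMap.one_add_le_sup_seminorm_apply (𝕜 := ℝ)
      (m := (2 * (s + 1), 0)) (k := 2 * (s + 1)) (n := 0) le_rfl le_rfl f k
    simpa [norm_iteratedFDeriv_zero] using h
  have hbdd : BddAbove (Set.range fun k : ℝ × EuclideanSpace ℝ (Fin s) =>
      (1 + k.1 ^ 2 + ‖k.2‖ ^ 2) ^ (s + 1) * ‖f k‖) := by
    refine ⟨2 ^ (s + 1) * (2 ^ (2 * (s + 1)) *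
      (Finset.Iic (2 * (s + 1), 0)).sup (fun m' => SchwartzMap.seminorm ℝ m'.1 m'.2) f), ?_⟩
    rintro x ⟨k, rfl⟩
    calc (1 + k.1 ^ 2 + ‖k.2‖ ^ 2) ^ (s + 1) * ‖f k‖
        ≤ (2 * (1 + ‖k‖) ^ 2) ^ (s + 1) * ‖f k‖ :=
          mul_le_mul_of_nonneg_right (pow_le_pow_left₀ (by positivity) (hb1 k) _) (norm_nonneg _)
      _ = 2 ^ (s + 1) * ((1 + ‖k‖) ^ (2 * (s + 1)) * ‖f k‖) := by
          rw [mul_pow, ← pow_mul]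
          ring_nf
      _ ≤ 2 ^ (s + 1) * (2 ^ (2 * (s + 1)) *
            (Finset.Iic (2 * (s + 1), 0)).sup (fun m' => SchwartzMap.seminorm ℝ m'.1 m'.2) f) :=
          mul_le_mul_of_nonneg_left (hsem k) (by positivity)
  have hM0 : 0 ≤ M := by
    have h00 : (0:ℝ) ≤ (1 + (0:ℝ) ^ 2 + ‖(0 : EuclideanSpace ℝ (Fin s))‖ ^ 2) ^ (s + 1)
        * ‖f (0, 0)‖ := by positivity
    exact h00.trans (le_ciSup hbdd ((0 : ℝ), (0 : EuclideanSpace ℝ (Fin s))))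
  have hfle : ∀ k : ℝ × EuclideanSpace ℝ (Fin s),
      ‖f k‖ ≤ M * (1 + k.1 ^ 2 + ‖k.2‖ ^ 2) ^ (-((s:ℝ) + 1)) := by
    intro k
    have hle := le_ciSup hbdd k
    have hpos : (0:ℝ) < 1 + k.1 ^ 2 + ‖k.2‖ ^ 2 := by positivity
    have hppos : (0:ℝ) < (1 + k.1 ^ 2 + ‖k.2‖ ^ 2) ^ (s + 1) := by positivity
    have hnp : (1 + k.1 ^ 2 + ‖k.2‖ ^ 2) ^ (-((s:ℝ) + 1))
        = ((1 + k.1 ^ 2 + ‖k.2‖ ^ 2) ^ (s + 1 : ℕ))⁻¹ := by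
      rw [← Real.rpow_natCast (1 + k.1 ^ 2 + ‖k.2‖ ^ 2) (s + 1), ← Real.rpow_neg hpos.le]
      congr 1
      push_cast
      ring
    rw [hnp, mul_comm M, ← div_eq_inv_mul, le_div_iff₀ hppos, mul_comm, hMdef]
    exact hle
  -- pointwise bound on the full integrand
  have hptw : ∀ k : ℝ × EuclideanSpace ℝ (Fin s),
      ‖f k‖ * |k.1 ^ 2 - ‖k.2‖ ^ 2 - m ^ 2| ^ (-α) *
          (1 + k.1 ^ 2 + ‖k.2‖ ^ 2) ^ (-((s : ℝ) + 1)) ≤ M * G k := by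
    intro k
    have hpos : (0:ℝ) < 1 + k.1 ^ 2 + ‖k.2‖ ^ 2 := by positivity
    have hAnn : (0:ℝ) ≤ |k.1 ^ 2 - ‖k.2‖ ^ 2 - m ^ 2| ^ (-α) :=
      Real.rpow_nonneg (abs_nonneg _) _
    have hwnn : (0:ℝ) ≤ (1 + k.1 ^ 2 + ‖k.2‖ ^ 2) ^ (-((s:ℝ) + 1)) :=
      Real.rpow_nonneg hpos.le _
    have hww : (1 + k.1 ^ 2 + ‖k.2‖ ^ 2) ^ (-((s:ℝ) + 1))
        * (1 + k.1 ^ 2 + ‖k.2‖ ^ 2) ^ (-((s:ℝ) + 1))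
        = (1 + k.1 ^ 2 + ‖k.2‖ ^ 2) ^ (-(2 * (s:ℝ) + 2)) := by
      rw [← Real.rpow_add hpos]
      ring_nf
    calc ‖f k‖ * |k.1 ^ 2 - ‖k.2‖ ^ 2 - m ^ 2| ^ (-α) *
          (1 + k.1 ^ 2 + ‖k.2‖ ^ 2) ^ (-((s : ℝ) + 1))
        ≤ (M * (1 + k.1 ^ 2 + ‖k.2‖ ^ 2) ^ (-((s:ℝ) + 1)))
            * |k.1 ^ 2 - ‖k.2‖ ^ 2 - m ^ 2| ^ (-α) *
            (1 + k.1 ^ 2 + ‖k.2‖ ^ 2) ^ (-((s : ℝ) + 1)) :=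
          mul_le_mul_of_nonneg_right
            (mul_le_mul_of_nonneg_right (hfle k) hAnn) hwnn
      _ = M * (|k.1 ^ 2 - ‖k.2‖ ^ 2 - m ^ 2| ^ (-α)
            * ((1 + k.1 ^ 2 + ‖k.2‖ ^ 2) ^ (-((s:ℝ) + 1))
              * (1 + k.1 ^ 2 + ‖k.2‖ ^ 2) ^ (-((s:ℝ) + 1)))) := by ring
      _ = M * G k := by rw [hww]
  -- integrability of the integrand
  have hmeas : AEStronglyMeasurable (fun k : ℝ × EuclideanSpace ℝ (Fin s) =>
      ‖f k‖ * |k.1 ^ 2 - ‖k.2‖ ^ 2 - m ^ 2| ^ (-α) *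
        (1 + k.1 ^ 2 + ‖k.2‖ ^ 2) ^ (-((s : ℝ) + 1))) volume := by
    have hc : Continuous fun k : ℝ × EuclideanSpace ℝ (Fin s) => ‖f k‖ :=
      f.continuous.norm
    have hm1 : Measurable (fun k : ℝ × EuclideanSpace ℝ (Fin s) =>
        |k.1 ^ 2 - ‖k.2‖ ^ 2 - m ^ 2| ^ (-α)) := by fun_prop
    have hm2 : Measurable (fun k : ℝ × EuclideanSpace ℝ (Fin s) =>
        (1 + k.1 ^ 2 + ‖k.2‖ ^ 2) ^ (-((s : ℝ) + 1))) := by fun_prop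
    exact ((hc.measurable.mul hm1).mul hm2).aestronglyMeasurable
  have hint : Integrable (fun k : ℝ × EuclideanSpace ℝ (Fin s) =>
      ‖f k‖ * |k.1 ^ 2 - ‖k.2‖ ^ 2 - m ^ 2| ^ (-α) *
        (1 + k.1 ^ 2 + ‖k.2‖ ^ 2) ^ (-((s : ℝ) + 1))) := by
    apply Integrable.mono' (hGint.const_mul M) hmeas
    filter_upwards with k
    have hnn : (0:ℝ) ≤ ‖f k‖ * |k.1 ^ 2 - ‖k.2‖ ^ 2 - m ^ 2| ^ (-α) *
        (1 + k.1 ^ 2 + ‖k.2‖ ^ 2) ^ (-((s : ℝ) + 1)) := by positivity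
    rw [Real.norm_eq_abs, abs_of_nonneg hnn]
    exact hptw k
  calc ∫ k : ℝ × EuclideanSpace ℝ (Fin s),
        ‖f k‖ * |k.1 ^ 2 - ‖k.2‖ ^ 2 - m ^ 2| ^ (-α) *
          (1 + k.1 ^ 2 + ‖k.2‖ ^ 2) ^ (-((s : ℝ) + 1))
      ≤ ∫ k, M * G k := integral_mono hint (hGint.const_mul M) hptw
    _ = M * ∫ k, G k := integral_const_mul M G
    _ ≤ M * max (∫ k, G k) 1 := mul_le_mul_of_nonneg_left (le_max_left _ _) hM0
    _ = max (∫ k, G k) 1 * M := mul_comm _ _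
end
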